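/- Let (G, ≤) be a lefthanded graph with labels p_v ∈ [0,1] such that B(S) > 0 for all S ⊆ V, and set x_v = p_v · B(F_v) / B(D_v). Then Π_{v ∈ V} (1 − x_v) = B(V). -/

import Mathlib

open scoped Classical

/-- A tree order: whenever `w < u` and `w < v`, the elements `u` and `v` are comparable. -/
def TreeOrder (V : Type*) [PartialOrder V] : Prop :=
  ∀ w u v : V, w < u → w < v → (u ≤ v ∨ v ≤ u)

/-- A lefthanded graph with respect to the partial order on `V`. -/
def Lefthanded {V : Type*} [PartialOrder V] (G : SimpleGraph V) : Prop :=
  TreeOrder V ∧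
  (∀ u v : V, G.Adj u v → u ≤ v ∨ v ≤ u) ∧
  (∀ w u v : V, w < u → u < v → G.Adj v w → G.Adj v u)

/-- `D_v = {u : u < v}`. -/
noncomputable def Dset {V : Type*} [Fintype V] [PartialOrder V] (v : V) : Finset V :=
  Finset.univ.filter (fun u => u < v)

/-- `D̄_v = D_v ∪ {v}`. -/
noncomputable def Dbar {V : Type*} [Fintype V] [DecidableEq V] [PartialOrder V] (v : V) :
    Finset V :=
  insert v (Dset v)

/-- `N_v = {u < v : u ~ v}`. -/
noncomputable def Nset {V : Type*} [Fintype V] [PartialOrder V] (G : SimpleGraph V) (v : V) :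
    Finset V :=
  Finset.univ.filter (fun u => u < v ∧ G.Adj u v)

/-- `F_v = D_v \ N_v`. -/
noncomputable def Fset {V : Type*} [Fintype V] [DecidableEq V] [PartialOrder V]
    (G : SimpleGraph V) (v : V) : Finset V :=
  Dset v \ Nset G v

/-- `μ(U)`: the set of maximal elements of `U`. -/
noncomputable def maxElts {V : Type*} [PartialOrder V] (U : Finset V) : Finset V :=
  U.filter (fun u => ∀ w ∈ U, ¬ u < w)

/-- `I` is an independent set of `G`. -/
def IndepSet {V : Type*} (G : SimpleGraph V) (I : Finset V) : Prop :=
  ∀ u ∈ I, ∀ w ∈ I, ¬ G.Adj u w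

/-- `B(S) = Σ_{I ⊆ S, I independent} (−1)^{|I|} Π_{v∈I} p_v`. -/
noncomputable def Bfun {V : Type*} [Fintype V] (G : SimpleGraph V) (p : V → ℝ) (S : Finset V) :
    ℝ :=
  ∑ I ∈ S.powerset.filter (fun I => IndepSet G I), (-1 : ℝ) ^ I.card * ∏ v ∈ I, p v

/-- `𝔮(S) = Σ_{I ⊇ S, I independent} (−1)^{|I|−|S|} Π_{v∈I} p_v`. -/
noncomputable def qfun {V : Type*} [Fintype V] (G : SimpleGraph V) (p : V → ℝ) (S : Finset V) :
    ℝ :=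
  ∑ I ∈ Finset.univ.powerset.filter (fun I => IndepSet G I ∧ S ⊆ I),
    (-1 : ℝ) ^ (I.card - S.card) * ∏ v ∈ I, p v

/-- A down-closed set. -/
def DownClosed {V : Type*} [Fintype V] [PartialOrder V] (S : Finset V) : Prop :=
  ∀ s ∈ S, Dset s ⊆ S

/-!
Remove a maximal vertex `m` from a down-closed set `S`. Since `≤` is a tree order, the rest of `S`
splits as `D_m ⊔ R`, with `R` the vertices incomparable to `m`, and no edge joins `D_m` to `R`; the
neighbours of `m` in `S` all lie in `N_m`. Hence `B(S ∖ m) = B(D_m) B(R)` and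
`B(S) = B(S ∖ m) - p_m B(F_m) B(R) = B(S ∖ m) (1 - x_m)`, and induction over down-closed sets
gives the product formula.
-/

open Finset

section Independence

variable {V : Type*} {G : SimpleGraph V}

theorem IndepSet.mono {I J : Finset V} (hJ : IndepSet G J) (hIJ : I ⊆ J) : IndepSet G I :=
  fun u hu w hw => hJ u (hIJ hu) w (hIJ hw)

theorem indepSet_union_iff [DecidableEq V] {I J : Finset V} :
    IndepSet G (I ∪ J) ↔ IndepSet G I ∧ IndepSet G J ∧ ∀ u ∈ I, ∀ w ∈ J, ¬ G.Adj u w := by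
  refine ⟨fun h => ⟨h.mono subset_union_left, h.mono subset_union_right,
    fun u hu w hw => h u (mem_union_left _ hu) w (mem_union_right _ hw)⟩, ?_⟩
  rintro ⟨hI, hJ, hIJ⟩ u hu w hw hadj
  rcases mem_union.mp hu with hu | hu <;> rcases mem_union.mp hw with hw | hw
  · exact hI u hu w hw hadj
  · exact hIJ u hu w hw hadj
  · exact hIJ w hw u hu hadj.symm
  · exact hJ u hu w hw hadj

end Independence

section Bfun

variable {V : Type*} [Fintype V] {G : SimpleGraph V} {p : V → ℝ}

theorem Bfun_empty : Bfun G p ∅ = 1 := by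
  rw [Bfun, powerset_empty, filter_true_of_mem (by simp [IndepSet])]
  simp

theorem Bfun_union [DecidableEq V] {S T : Finset V} (hST : Disjoint S T)
    (hadj : ∀ u ∈ S, ∀ w ∈ T, ¬ G.Adj u w) :
    Bfun G p (S ∪ T) = Bfun G p S * Bfun G p T := by
  rw [Bfun, Bfun, Bfun, sum_mul_sum, ← sum_product']
  refine sum_nbij' (fun I => (I ∩ S, I ∩ T)) (fun IJ => IJ.1 ∪ IJ.2) ?_ ?_ ?_ ?_ ?_
  · intro I hI
    simp only [mem_filter, mem_powerset, mem_product] at hI ⊢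
    exact ⟨⟨inter_subset_right, hI.2.mono inter_subset_left⟩,
      inter_subset_right, hI.2.mono inter_subset_left⟩
  · rintro ⟨I, J⟩ hIJ
    simp only [mem_filter, mem_powerset, mem_product] at hIJ ⊢
    exact ⟨union_subset_union hIJ.1.1 hIJ.2.1, indepSet_union_iff.mpr
      ⟨hIJ.1.2, hIJ.2.2, fun u hu w hw => hadj u (hIJ.1.1 hu) w (hIJ.2.1 hw)⟩⟩
  · intro I hI
    simp only [mem_filter, mem_powerset] at hI
    rw [← inter_union_distrib_left, inter_eq_left.mpr hI.1]
  · rintro ⟨I, J⟩ hIJ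
    simp only [mem_product, mem_filter, mem_powerset] at hIJ
    have hIJ' : Disjoint I J := hST.mono hIJ.1.1 hIJ.2.1
    ext x <;> simp only [mem_inter, mem_union] <;> grind [disjoint_left]
  · intro I hI
    simp only [mem_filter, mem_powerset] at hI
    have hdisj : Disjoint (I ∩ S) (I ∩ T) := hST.mono inter_subset_right inter_subset_right
    conv_lhs => rw [← inter_eq_left.mpr hI.1, inter_union_distrib_left]
    rw [card_union_of_disjoint hdisj, prod_union hdisj, pow_add]
    ring

theorem Bfun_insert [DecidableEq V] {m : V} {S : Finset V} (hm : m ∉ S) :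
    Bfun G p (insert m S) = Bfun G p S - p m * Bfun G p (S.filter fun u => ¬ G.Adj u m) := by
  set T := S.filter fun u => ¬ G.Adj u m
  have hindep : ∀ I ⊆ S, IndepSet G (insert m I) ↔ IndepSet G I ∧ I ⊆ T := by
    intro I hIS
    rw [insert_eq, indepSet_union_iff]
    simp only [IndepSet, T, subset_iff, mem_filter, mem_singleton, forall_eq, G.adj_comm m]
    exact ⟨fun ⟨_, hI, hmI⟩ => ⟨hI, fun x hx => ⟨hIS hx, hmI x hx⟩⟩,
      fun ⟨hI, hIT⟩ => ⟨G.irrefl, hI, fun x hx => (hIT hx).2⟩⟩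
  simp only [Bfun, sum_filter]
  rw [sum_powerset_insert hm, sub_eq_add_neg, mul_sum, ← sum_neg_distrib]
  congr 1
  calc ∑ I ∈ S.powerset, (if IndepSet G (insert m I) then
          (-1 : ℝ) ^ #(insert m I) * ∏ v ∈ insert m I, p v else 0)
      = ∑ I ∈ S.powerset, if IndepSet G I ∧ I ⊆ T then
          -(p m * ((-1 : ℝ) ^ #I * ∏ v ∈ I, p v)) else 0 := by
        refine sum_congr rfl fun I hI => ?_
        have hIS := mem_powerset.mp hI
        have hmI : m ∉ I := fun h => hm (hIS h)
        rw [if_congr (hindep I hIS) rfl rfl, card_insert_of_notMem hmI, prod_insert hmI, pow_succ]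
        split_ifs <;> ring
    _ = ∑ I ∈ T.powerset, if IndepSet G I ∧ I ⊆ T then
          -(p m * ((-1 : ℝ) ^ #I * ∏ v ∈ I, p v)) else 0 := by
        refine (sum_subset (powerset_mono.mpr (filter_subset _ _)) fun I _ hIT => ?_).symm
        rw [if_neg fun h => hIT (mem_powerset.mpr h.2)]
    _ = ∑ I ∈ T.powerset, -(p m * if IndepSet G I then
          (-1 : ℝ) ^ #I * ∏ v ∈ I, p v else 0) := by
        refine sum_congr rfl fun I hI => ?_
        simp only [mem_powerset.mp hI, and_true]
        split_ifs <;> simp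

end Bfun

section Order

variable {V : Type*} [PartialOrder V] {G : SimpleGraph V}

theorem Lefthanded.not_adj_of_lt_of_incomparable (hG : Lefthanded G) {u m w : V}
    (hum : u < m) (hwm : ¬ w ≤ m) (hmw : ¬ m ≤ w) : ¬ G.Adj u w := by
  intro hadj
  rcases hG.2.1 u w hadj with huw | hwu
  · rcases hG.1 u w m (huw.lt_of_ne (G.ne_of_adj hadj)) hum with h | h
    exacts [hwm h, hmw h]
  · exact hwm (hwu.trans hum.le)

theorem Lefthanded.lt_of_adj_of_maximal (hG : Lefthanded G) {S : Finset V} {u m : V}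
    (hm : Maximal (· ∈ S) m) (hu : u ∈ S) (hadj : G.Adj u m) : u < m := by
  rcases hG.2.1 u m hadj with h | h
  · exact h.lt_of_ne (G.ne_of_adj hadj)
  · exact absurd (h.lt_of_ne (G.ne_of_adj hadj).symm) (hm.not_gt hu)

variable [Fintype V]

@[simp]
theorem mem_Dset {u v : V} : u ∈ Dset v ↔ u < v := by
  simp [Dset]

@[simp]
theorem mem_Fset [DecidableEq V] {u v : V} : u ∈ Fset G v ↔ u < v ∧ ¬ G.Adj u v := by
  simp +contextual [Fset, Nset]

theorem DownClosed.erase_of_maximal [DecidableEq V] {S : Finset V} {m : V} (hS : DownClosed S)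
    (hm : Maximal (· ∈ S) m) : DownClosed (S.erase m) := by
  intro s hs u hu
  refine mem_erase.mpr ⟨?_, hS s (mem_of_mem_erase hs) hu⟩
  rintro rfl
  exact hm.not_gt (mem_of_mem_erase hs) (mem_Dset.mp hu)

end Order

section Product

variable {V : Type*} [Fintype V] [DecidableEq V] [PartialOrder V] {G : SimpleGraph V}
  {p : V → ℝ}

theorem Lefthanded.Bfun_eq_mul_of_maximal (hG : Lefthanded G) {S : Finset V} {m : V}
    (hS : DownClosed S) (hm : Maximal (· ∈ S) m) (hD : Bfun G p (Dset m) ≠ 0) :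
    Bfun G p S
      = Bfun G p (S.erase m) * (1 - p m * Bfun G p (Fset G m) / Bfun G p (Dset m)) := by
  set R := S.erase m \ Dset m
  have hDS : Dset m ⊆ S.erase m := fun u hu =>
    mem_erase.mpr ⟨(mem_Dset.mp hu).ne, hS m hm.prop hu⟩
  have hR : ∀ w ∈ R, ¬ w ≤ m ∧ ¬ m ≤ w := by
    intro w hw
    obtain ⟨hwS, hwm⟩ := mem_sdiff.mp hw
    obtain ⟨hne, hwS⟩ := mem_erase.mp hwS
    exact ⟨fun h => hwm (mem_Dset.mpr (h.lt_of_ne hne)),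
      fun h => hm.not_gt hwS (h.lt_of_ne hne.symm)⟩
  have hDR : ∀ u ∈ Dset m, ∀ w ∈ R, ¬ G.Adj u w := fun u hu w hw =>
    hG.not_adj_of_lt_of_incomparable (mem_Dset.mp hu) (hR w hw).1 (hR w hw).2
  have hFR : ∀ u ∈ Fset G m, ∀ w ∈ R, ¬ G.Adj u w := fun u hu =>
    hDR u (sdiff_subset hu)
  have hfilter : (S.erase m).filter (fun u => ¬ G.Adj u m) = Fset G m ∪ R := by
    ext u
    simp only [mem_filter, mem_union, mem_Fset, R, mem_sdiff, mem_Dset]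
    by_cases hum : u < m
    · simp [hum, hDS (mem_Dset.mpr hum)]
    · simp only [hum, false_and, not_false_eq_true, and_true, false_or, and_iff_left_iff_imp]
      exact fun hu hadj => hum (hG.lt_of_adj_of_maximal hm (mem_of_mem_erase hu) hadj)
  have herase : Bfun G p (S.erase m) = Bfun G p (Dset m) * Bfun G p R := by
    rw [← union_sdiff_of_subset hDS]
    exact Bfun_union disjoint_sdiff hDR
  have hinsert : Bfun G p S
      = Bfun G p (S.erase m) - p m * (Bfun G p (Fset G m) * Bfun G p R) := by
    conv_lhs => rw [← insert_erase hm.prop]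
    rw [Bfun_insert (notMem_erase m S), hfilter,
      Bfun_union (S := Fset G m) (disjoint_sdiff.mono_left sdiff_subset) hFR]
  rw [hinsert, herase]
  field_simp

theorem Lefthanded.prod_eq_Bfun_of_downClosed (hG : Lefthanded G)
    (hD : ∀ v, Bfun G p (Dset v) ≠ 0) (S : Finset V) (hS : DownClosed S) :
    ∏ v ∈ S, (1 - p v * Bfun G p (Fset G v) / Bfun G p (Dset v)) = Bfun G p S := by
  induction S using strongInduction with
  | H S ih =>
    rcases S.eq_empty_or_nonempty with rfl | hne
    · rw [prod_empty, Bfun_empty]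
    obtain ⟨m, hm⟩ := exists_maximal hne
    rw [← mul_prod_erase S _ hm.prop, ih _ (erase_ssubset hm.prop) (hS.erase_of_maximal hm),
      hG.Bfun_eq_mul_of_maximal hS hm (hD m), mul_comm]

end Product

theorem stmt9_general {V : Type*} [Fintype V] [DecidableEq V] [PartialOrder V]
    (G : SimpleGraph V) (p : V → ℝ)
    (hG : Lefthanded G) (hB : ∀ S : Finset V, 0 < Bfun G p S) :
    ∏ v : V, (1 - p v * Bfun G p (Fset G v) / Bfun G p (Dset v))
      = Bfun G p Finset.univ :=
  hG.prod_eq_Bfun_of_downClosed (fun _ => (hB _).ne') univ fun _ _ _ _ => mem_univ _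

theorem stmt9 {V : Type*} [Fintype V] [DecidableEq V] [PartialOrder V]
    (G : SimpleGraph V) (p : V → ℝ) (hp : ∀ v, 0 ≤ p v ∧ p v ≤ 1)
    (hG : Lefthanded G) (hB : ∀ S : Finset V, 0 < Bfun G p S) :
    ∏ v : V, (1 - p v * Bfun G p (Fset G v) / Bfun G p (Dset v))
      = Bfun G p Finset.univ :=
  stmt9_general G p hG hB
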